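/- arXiv:2408.15434 — 6 statements merged into one kernel-verified Lean document; each statement's English description precedes it below -/
import Mathlib

section
/- Let G be a weighted bipartite graph with non-negative integral edge weights, and let φ(G) denote its unfolding: for each vertex u, create W_u = max_{e∋u} w_e copies u^1,...,u^{W_u}, and for each edge e=(u,v) of weight w_e, create the edges {(u^i, v^{w_e-i+1}) : i ∈ [w_e]}. Then the maximum weight of a matching in G equals the maximum cardinality of a matching in φ(G), i.e. μ_w(G) = μ(φ(G)). -/
open scoped Classical BigOperators

noncomputable section

variable {V : Type*}

/-- A matching: a set of non-loop edges, pairwise vertex-disjoint. -/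
def IsMatching (M : Finset (Sym2 V)) : Prop :=
  (∀ e ∈ M, ¬ e.IsDiag) ∧
    ∀ e ∈ M, ∀ f ∈ M, e ≠ f → ∀ v : V, v ∈ e → v ∉ f

/-- μ(G): maximum cardinality of a matching contained in `G`. -/
def matchNum (G : Finset (Sym2 V)) : ℕ :=
  sSup {k | ∃ M : Finset (Sym2 V), M ⊆ G ∧ IsMatching M ∧ M.card = k}

/-- μ_w(G): maximum weight of a matching contained in `G` (ℕ-valued weights). -/
def matchWeight (G : Finset (Sym2 V)) (w : Sym2 V → ℕ) : ℕ :=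
  sSup {s | ∃ M : Finset (Sym2 V), M ⊆ G ∧ IsMatching M ∧ ∑ e ∈ M, w e = s}

/-- μ_w(G): maximum weight of a matching contained in `G` (ℝ-valued weights). -/
def matchWeightR (G : Finset (Sym2 V)) (w : Sym2 V → ℝ) : ℝ :=
  sSup {s | ∃ M : Finset (Sym2 V), M ⊆ G ∧ IsMatching M ∧ ∑ e ∈ M, w e = s}

/-- Degree of a vertex in an edge set. -/
def deg (H : Finset (Sym2 V)) (v : V) : ℕ := (H.filter fun e => v ∈ e).card

/-- The edge-degree deg_H(u) + deg_H(v) of an edge e = (u,v). -/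
def degSum (H : Finset (Sym2 V)) (e : Sym2 V) : ℕ :=
  deg H e.out.1 + deg H e.out.2

/-- The unfolded copies of a weighted edge e = (u,v):
the edges (u^i, v^{w_e+1-i}) for i ∈ [w_e]. -/
def unfoldEdge (w : Sym2 V → ℕ) (e : Sym2 V) : Finset (Sym2 (V × ℕ)) :=
  (Finset.Icc 1 (w e)).image fun i => s((e.out.1, i), (e.out.2, w e + 1 - i))

/-- The unfolding φ(G) of a weighted graph. -/
def unfoldGraph (G : Finset (Sym2 V)) (w : Sym2 V → ℕ) : Finset (Sym2 (V × ℕ)) :=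
  G.biUnion (unfoldEdge w)

/-- The refolding R(H) ⊆ G of a subgraph H ⊆ φ(G): the weighted edges having
at least one unfolded copy in H. -/
def refold (G : Finset (Sym2 V)) (w : Sym2 V → ℕ)
    (H : Finset (Sym2 (V × ℕ))) : Finset (Sym2 V) :=
  G.filter fun e => ∃ f ∈ unfoldEdge w e, f ∈ H

/-- A bipartite edge set: some side `A` of a bipartition meets every edge exactly once. -/
def IsBipartite (G : Finset (Sym2 V)) : Prop :=
  ∃ A : Set V, ∀ e ∈ G, ∃ u v, e = s(u, v) ∧ u ∈ A ∧ v ∉ A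

/-!
Unfolding a matching of `G` edge by edge gives a matching of `φ(G)` with as many edges as the
matching had weight. Conversely, a weighted vertex cover `y` of `G` yields the vertex cover
`{u^i | i ≤ y u}` of `φ(G)`: an edge `(u^i, v^{w+1-i})` with `w ≤ y u + y v` has `i ≤ y u` or
`w + 1 - i ≤ y v`. So `μ(φ(G))` is at most the minimum value of a cover, which by Egerváry's
theorem equals `μ_w(G)` when `G` is bipartite.
-/

theorem Sym2.mk_out_fst_out_snd (e : Sym2 V) : s(e.out.1, e.out.2) = e :=
  Quot.out_eq e

theorem Sym2.out_fst_ne_out_snd {e : Sym2 V} (he : ¬ e.IsDiag) : e.out.1 ≠ e.out.2 :=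
  fun h => he (by rw [← e.mk_out_fst_out_snd, h]; rfl)

theorem isMatching_empty : IsMatching (∅ : Finset (Sym2 V)) := by
  simp [IsMatching]

theorem IsMatching.card_le_card_of_forall_exists_mem {N : Finset (Sym2 V)} (hN : IsMatching N)
    {C : Finset V} (hC : ∀ x ∈ N, ∃ p ∈ C, p ∈ x) : N.card ≤ C.card :=
  Finset.card_le_card_of_forall_subsingleton (fun x p => p ∈ x) hC
    fun p _ x ⟨hx, hpx⟩ x' ⟨hx', hpx'⟩ => by_contra fun hne => hN.2 x hx x' hx' hne p hpx hpx'

theorem isMatching_biUnion [DecidableEq V] {ι : Type*} {s : Finset ι} {t : ι → Finset (Sym2 V)}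
    (ht : ∀ i ∈ s, IsMatching (t i))
    (hdisj : ∀ i ∈ s, ∀ j ∈ s, i ≠ j → ∀ x ∈ t i, ∀ x' ∈ t j, ∀ v ∈ x, v ∉ x') :
    IsMatching (s.biUnion t) := by
  simp only [IsMatching, Finset.mem_biUnion]
  refine ⟨fun x ⟨i, hi, hx⟩ => (ht i hi).1 x hx, ?_⟩
  rintro x ⟨i, hi, hx⟩ x' ⟨j, hj, hx'⟩ hne v hv
  obtain rfl | hij := eq_or_ne i j
  · exact (ht i hi).2 x hx x' hx' hne v hv
  · exact hdisj i hi j hj hij x hx x' hx' v hv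

theorem isMatching_union [DecidableEq V] {M₁ M₂ : Finset (Sym2 V)} (h₁ : IsMatching M₁)
    (h₂ : IsMatching M₂)
    (hdisj : ∀ x ∈ M₁, ∀ x' ∈ M₂, ∀ v ∈ x, v ∉ x') : IsMatching (M₁ ∪ M₂) := by
  refine ⟨fun x hx => (Finset.mem_union.1 hx).elim (h₁.1 x) (h₂.1 x), ?_⟩
  intro x hx x' hx' hne v hv hv'
  rcases Finset.mem_union.1 hx with hx | hx <;> rcases Finset.mem_union.1 hx' with hx' | hx'
  exacts [h₁.2 x hx x' hx' hne v hv hv', hdisj x hx x' hx' v hv hv',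
    hdisj x' hx' x hx v hv' hv, h₂.2 x hx x' hx' hne v hv hv']

theorem le_matchWeight {G M : Finset (Sym2 V)} {w : Sym2 V → ℕ} (hMG : M ⊆ G)
    (hM : IsMatching M) : ∑ e ∈ M, w e ≤ matchWeight G w :=
  le_csSup ⟨∑ e ∈ G, w e, fun _ ⟨_, h, _, hs⟩ => hs ▸ Finset.sum_le_sum_of_subset h⟩
    ⟨M, hMG, hM, rfl⟩

theorem matchWeight_le {G : Finset (Sym2 V)} {w : Sym2 V → ℕ} {n : ℕ}
    (h : ∀ M ⊆ G, IsMatching M → ∑ e ∈ M, w e ≤ n) : matchWeight G w ≤ n :=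
  csSup_le ⟨0, ∅, Finset.empty_subset _, isMatching_empty, Finset.sum_empty⟩
    fun _ ⟨M, hMG, hM, hs⟩ => hs ▸ h M hMG hM

theorem le_matchNum {G M : Finset (Sym2 V)} (hMG : M ⊆ G) (hM : IsMatching M) :
    M.card ≤ matchNum G :=
  le_csSup ⟨G.card, fun _ ⟨_, h, _, hs⟩ => hs ▸ Finset.card_le_card h⟩ ⟨M, hMG, hM, rfl⟩

theorem matchNum_le {G : Finset (Sym2 V)} {n : ℕ} (h : ∀ M ⊆ G, IsMatching M → M.card ≤ n) :
    matchNum G ≤ n :=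
  csSup_le ⟨0, ∅, Finset.empty_subset _, isMatching_empty, Finset.card_empty⟩
    fun _ ⟨M, hMG, hM, hs⟩ => hs ▸ h M hMG hM

def verts (G : Finset (Sym2 V)) : Finset V :=
  G.biUnion Sym2.toFinset

theorem mem_verts {G : Finset (Sym2 V)} {v : V} : v ∈ verts G ↔ ∃ e ∈ G, v ∈ e := by
  simp [verts]

theorem verts_mono {G H : Finset (Sym2 V)} (h : H ⊆ G) : verts H ⊆ verts G :=
  Finset.biUnion_subset_biUnion_of_subset_left _ h

def pairSum (y : V → ℕ) : Sym2 V → ℕ :=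
  Sym2.lift ⟨fun u v => y u + y v, fun _ _ => add_comm _ _⟩

@[simp]
theorem pairSum_mk (y : V → ℕ) (u v : V) : pairSum y s(u, v) = y u + y v :=
  rfl

theorem pairSum_eq_out (y : V → ℕ) (e : Sym2 V) : pairSum y e = y e.out.1 + y e.out.2 := by
  conv_lhs => rw [← e.mk_out_fst_out_snd]
  rfl

theorem sum_toFinset_eq_pairSum (y : V → ℕ) {e : Sym2 V} (he : ¬ e.IsDiag) :
    ∑ v ∈ e.toFinset, y v = pairSum y e := by
  induction e using Sym2.ind with
  | h u v =>
    rw [Sym2.toFinset_mk_eq, Finset.sum_pair (Sym2.mk_isDiag_iff.not.1 he), pairSum_mk]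

theorem IsMatching.sum_pairSum {M : Finset (Sym2 V)} (hM : IsMatching M) (y : V → ℕ) :
    ∑ e ∈ M, pairSum y e = ∑ v ∈ verts M, y v := by
  rw [verts, Finset.sum_biUnion]
  · exact Finset.sum_congr rfl fun e he => (sum_toFinset_eq_pairSum y (hM.1 e he)).symm
  · intro e he f hf hne
    simp only [Function.onFun, Finset.disjoint_left, Sym2.mem_toFinset]
    exact hM.2 e he f hf hne

section Unfolding

variable {G M : Finset (Sym2 V)} {w : Sym2 V → ℕ} {e : Sym2 V}

theorem fst_mem_of_mem_unfoldEdge {x : Sym2 (V × ℕ)} (hx : x ∈ unfoldEdge w e) {p : V × ℕ}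
    (hp : p ∈ x) : p.1 ∈ e := by
  obtain ⟨i, -, rfl⟩ := Finset.mem_image.1 hx
  rcases Sym2.mem_iff.1 hp with rfl | rfl
  exacts [e.out_fst_mem, e.out_snd_mem]

theorem isMatching_unfoldEdge (he : ¬ e.IsDiag) : IsMatching (unfoldEdge w e) := by
  have hne := Sym2.out_fst_ne_out_snd he
  refine ⟨?_, ?_⟩
  · intro x hx
    obtain ⟨i, -, rfl⟩ := Finset.mem_image.1 hx
    rw [Sym2.mk_isDiag_iff, Prod.mk.injEq]
    exact fun h => hne h.1
  · intro x hx x' hx' hxx' p hp hp'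
    obtain ⟨i, hi, rfl⟩ := Finset.mem_image.1 hx
    obtain ⟨j, hj, rfl⟩ := Finset.mem_image.1 hx'
    rw [Finset.mem_Icc] at hi hj
    have hij : i ≠ j := by rintro rfl; exact hxx' rfl
    simp only [Sym2.mem_iff] at hp hp'
    rcases hp with rfl | rfl <;> rcases hp' with h | h <;> simp only [Prod.mk.injEq] at h
    all_goals first | exact hne h.1 | exact hne h.1.symm | omega

theorem card_unfoldEdge (he : ¬ e.IsDiag) : (unfoldEdge w e).card = w e := by
  rw [unfoldEdge, Finset.card_image_of_injOn, Nat.card_Icc, Nat.add_sub_cancel]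
  intro i _ j _ hij
  rcases Sym2.eq_iff.1 hij with ⟨h, -⟩ | ⟨h, -⟩
  · exact (Prod.mk.inj h).2
  · exact absurd (Prod.mk.inj h).1 (Sym2.out_fst_ne_out_snd he)

theorem isMatching_biUnion_unfoldEdge (hG : ∀ e ∈ G, ¬ e.IsDiag) (hMG : M ⊆ G)
    (hM : IsMatching M) : IsMatching (M.biUnion (unfoldEdge w)) := by
  refine isMatching_biUnion (fun e he => isMatching_unfoldEdge (hG e (hMG he))) ?_
  intro e he f hf hef x hx x' hx' p hp hp'
  exact hM.2 e he f hf hef p.1 (fst_mem_of_mem_unfoldEdge hx hp) (fst_mem_of_mem_unfoldEdge hx' hp')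

theorem card_biUnion_unfoldEdge (hG : ∀ e ∈ G, ¬ e.IsDiag) (hMG : M ⊆ G) (hM : IsMatching M) :
    (M.biUnion (unfoldEdge w)).card = ∑ e ∈ M, w e := by
  rw [Finset.card_biUnion]
  · exact Finset.sum_congr rfl fun e he => card_unfoldEdge (hG e (hMG he))
  · intro e he f hf hef
    refine Finset.disjoint_left.2 fun x hx hx' => ?_
    exact hM.2 e he f hf hef x.out.1.1 (fst_mem_of_mem_unfoldEdge hx x.out_fst_mem)
      (fst_mem_of_mem_unfoldEdge hx' x.out_fst_mem)

theorem biUnion_unfoldEdge_subset (hMG : M ⊆ G) : M.biUnion (unfoldEdge w) ⊆ unfoldGraph G w :=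
  Finset.biUnion_subset_biUnion_of_subset_left _ hMG

end Unfolding

def IsCover (G : Finset (Sym2 V)) (w : Sym2 V → ℕ) (y : V → ℕ) : Prop :=
  ∀ e ∈ G, w e ≤ pairSum y e

def copies (S : Finset V) (y : V → ℕ) : Finset (V × ℕ) :=
  S.biUnion fun u => {u} ×ˢ Finset.Icc 1 (y u)

theorem mem_copies {S : Finset V} {y : V → ℕ} {p : V × ℕ} :
    p ∈ copies S y ↔ p.1 ∈ S ∧ 1 ≤ p.2 ∧ p.2 ≤ y p.1 := by
  obtain ⟨u, i⟩ := p
  simp [copies]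

theorem card_copies (S : Finset V) (y : V → ℕ) : (copies S y).card = ∑ u ∈ S, y u := by
  rw [copies, Finset.card_biUnion]
  · simp
  · intro u _ v _ huv
    simp only [Function.onFun, Finset.disjoint_left, Finset.mem_product, Finset.mem_singleton]
    exact fun p hp hp' => huv (hp.1.symm.trans hp'.1)

theorem IsCover.exists_mem_copies {G : Finset (Sym2 V)} {w : Sym2 V → ℕ} {y : V → ℕ}
    (hy : IsCover G w y) {x : Sym2 (V × ℕ)} (hx : x ∈ unfoldGraph G w) :
    ∃ p ∈ copies (verts G) y, p ∈ x := by
  obtain ⟨e, he, hxe⟩ := Finset.mem_biUnion.1 hx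
  obtain ⟨i, hi, rfl⟩ := Finset.mem_image.1 hxe
  rw [Finset.mem_Icc] at hi
  have hcov := hy e he
  rw [pairSum_eq_out] at hcov
  by_cases hiy : i ≤ y e.out.1
  · refine ⟨_, mem_copies.2 ⟨mem_verts.2 ⟨e, he, e.out_fst_mem⟩, hi.1, hiy⟩, Sym2.mem_mk_left _ _⟩
  · refine ⟨_, mem_copies.2 ⟨mem_verts.2 ⟨e, he, e.out_snd_mem⟩, ?_, ?_⟩, Sym2.mem_mk_right _ _⟩
    all_goals dsimp only; omega

theorem IsMatching.card_le_sum_of_isCover {G : Finset (Sym2 V)} {w : Sym2 V → ℕ} {y : V → ℕ}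
    {N : Finset (Sym2 (V × ℕ))} (hN : IsMatching N) (hNG : N ⊆ unfoldGraph G w)
    (hy : IsCover G w y) : N.card ≤ ∑ v ∈ verts G, y v := by
  rw [← card_copies]
  exact hN.card_le_card_of_forall_exists_mem fun x hx => hy.exists_mem_copies (hNG hx)

theorem Finset.exists_injOn_of_forall_card_le_card_biUnion [DecidableEq V] (s : Finset V)
    (t : V → Finset V) (h : ∀ u ⊆ s, u.card ≤ (u.biUnion t).card) :
    ∃ f : V → V, Set.InjOn f s ∧ ∀ a ∈ s, f a ∈ t a := by
  have hall : ∀ u : Finset s, u.card ≤ (u.biUnion fun a => t a).card := fun u => by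
    have hu : (u.map (Function.Embedding.subtype _)).biUnion t = u.biUnion fun a => t a := by
      ext; simp
    simpa [hu] using h (u.map (Function.Embedding.subtype _)) fun a ha => by
      obtain ⟨a, -, rfl⟩ := Finset.mem_map.1 ha
      exact a.2
  obtain ⟨f, hf, hft⟩ := (Finset.all_card_le_biUnion_card_iff_exists_injective _).1 hall
  refine ⟨fun a => if ha : a ∈ s then f ⟨a, ha⟩ else a, fun a ha b hb hab => ?_, fun a ha => ?_⟩
  · rw [Finset.mem_coe] at ha hb
    simp only [dif_pos ha, dif_pos hb] at hab
    exact congrArg Subtype.val (hf hab)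
  · simpa [dif_pos ha] using hft ⟨a, ha⟩

def IsBipartiteWith (G : Finset (Sym2 V)) (A : Set V) : Prop :=
  ∀ e ∈ G, ∃ u v, e = s(u, v) ∧ u ∈ A ∧ v ∉ A

namespace IsBipartiteWith

variable {G H : Finset (Sym2 V)} {A : Set V}

theorem compl (hA : IsBipartiteWith G A) : IsBipartiteWith G Aᶜ := fun e he => by
  obtain ⟨u, v, rfl, hu, hv⟩ := hA e he
  exact ⟨v, u, Sym2.eq_swap, hv, not_not.2 hu⟩

theorem mono (hA : IsBipartiteWith G A) (h : H ⊆ G) : IsBipartiteWith H A :=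
  fun e he => hA e (h he)

theorem not_mem_of_mk_mem (hA : IsBipartiteWith G A) {u v : V} (he : s(u, v) ∈ G) (hu : u ∈ A) :
    v ∉ A := by
  obtain ⟨a, b, hab, ha, hb⟩ := hA _ he
  rcases Sym2.eq_iff.1 hab with ⟨rfl, rfl⟩ | ⟨rfl, rfl⟩
  exacts [hb, absurd hu hb]

end IsBipartiteWith

def transfer (y : V → ℕ) (T N : Finset V) (v : V) : ℕ :=
  if v ∈ T then y v - 1 else if v ∈ N then y v + 1 else y v

theorem sum_transfer_add_card {y : V → ℕ} {S T N : Finset V} (hTS : T ⊆ S) (hNS : N ⊆ S)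
    (hTN : Disjoint T N) (hy : ∀ v ∈ T, 0 < y v) :
    ∑ v ∈ S, transfer y T N v + T.card = ∑ v ∈ S, y v + N.card := by
  have hcard : ∀ U ⊆ S, U.card = ∑ v ∈ S, if v ∈ U then 1 else 0 := fun U hU => by
    rw [Finset.sum_boole, Finset.filter_mem_eq_inter, Finset.inter_eq_right.2 hU, Nat.cast_id]
  rw [hcard T hTS, hcard N hNS, ← Finset.sum_add_distrib, ← Finset.sum_add_distrib]
  refine Finset.sum_congr rfl fun v _ => ?_
  by_cases hvT : v ∈ T
  · have := hy v hvT
    simp only [transfer, if_pos hvT, if_neg (Finset.disjoint_left.1 hTN hvT)]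
    omega
  · simp only [transfer, if_neg hvT]
    split_ifs <;> rfl

section MinCover

variable {G : Finset (Sym2 V)} {w : Sym2 V → ℕ} {y : V → ℕ} {A : Set V}

def IsMinCover (G : Finset (Sym2 V)) (w : Sym2 V → ℕ) (y : V → ℕ) : Prop :=
  IsCover G w y ∧ ∀ y', IsCover G w y' → ∑ v ∈ verts G, y v ≤ ∑ v ∈ verts G, y' v

theorem exists_isMinCover (G : Finset (Sym2 V)) (w : Sym2 V → ℕ) : ∃ y, IsMinCover G w y := by
  have hne : {y | IsCover G w y}.Nonempty := by
    refine ⟨fun _ => ∑ e ∈ G, w e, fun e he => ?_⟩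
    rw [pairSum_eq_out]
    exact (Finset.single_le_sum (fun _ _ => Nat.zero_le _) he).trans (Nat.le_add_right _ _)
  let total : (V → ℕ) → ℕ := fun y => ∑ v ∈ verts G, y v
  exact ⟨_, Function.argminOn_mem total _ hne, fun y' hy' => Function.argminOn_le total _ hy'⟩

def tightEdges (G : Finset (Sym2 V)) (w : Sym2 V → ℕ) (y : V → ℕ) : Finset (Sym2 V) :=
  G.filter fun e => w e = pairSum y e

def tightNbrs (G : Finset (Sym2 V)) (w : Sym2 V → ℕ) (y : V → ℕ) (u : V) : Finset V :=
  (verts G).filter fun v => s(u, v) ∈ tightEdges G w y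

def posSide (G : Finset (Sym2 V)) (y : V → ℕ) (A : Set V) : Finset V :=
  (verts G).filter fun v => v ∈ A ∧ 0 < y v

theorem mem_posSide {v : V} :
    v ∈ posSide G y A ↔ v ∈ verts G ∧ v ∈ A ∧ 0 < y v := by
  rw [posSide, Finset.mem_filter]

theorem isCover_transfer (hA : IsBipartiteWith G A) (hy : IsCover G w y) {T N : Finset V}
    (hTA : ∀ u ∈ T, u ∈ A)
    (hN : ∀ u ∈ T, ∀ v, s(u, v) ∈ G → w s(u, v) = y u + y v → v ∈ N) :
    IsCover G w (transfer y T N) := by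
  intro e he
  obtain ⟨u, v, rfl, hu, hv⟩ := hA e he
  have hvT : v ∉ T := fun h => hv (hTA v h)
  have hcov := hy _ he
  rw [pairSum_mk] at hcov ⊢
  have hle : ∀ x ∉ T, y x ≤ transfer y T N x := fun x hx => by
    simp only [transfer, if_neg hx]; split_ifs <;> omega
  have hv' := hle v hvT
  by_cases huT : u ∈ T
  · have hu' : transfer y T N u = y u - 1 := if_pos huT
    by_cases htight : w s(u, v) = y u + y v
    · have : transfer y T N v = y v + 1 := by
        simp only [transfer, if_neg hvT, if_pos (hN u huT v he htight)]
      omega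
    · omega
  · have := hle u huT
    omega

/-- Otherwise moving one unit of `y` from a violating set `T` to its tight neighbourhood gives a
cheaper cover. -/
theorem IsMinCover.card_le_card_biUnion_tightNbrs (hA : IsBipartiteWith G A)
    (hy : IsMinCover G w y) {T : Finset V} (hT : T ⊆ posSide G y A) :
    T.card ≤ (T.biUnion (tightNbrs G w y)).card := by
  set N := T.biUnion (tightNbrs G w y)
  have hT' : ∀ u ∈ T, u ∈ verts G ∧ u ∈ A ∧ 0 < y u := fun u hu => mem_posSide.1 (hT hu)
  have hN : ∀ v ∈ N, v ∈ verts G ∧ ∃ u ∈ T, s(u, v) ∈ G := fun v hv => by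
    obtain ⟨u, hu, hv⟩ := Finset.mem_biUnion.1 hv
    simp only [tightNbrs, tightEdges, Finset.mem_filter] at hv
    exact ⟨hv.1, u, hu, hv.2.1⟩
  have hTN : Disjoint T N := Finset.disjoint_left.2 fun v hvT hvN => by
    obtain ⟨-, u, hu, huv⟩ := hN v hvN
    exact hA.not_mem_of_mk_mem huv (hT' u hu).2.1 (hT' v hvT).2.1
  have hcover : IsCover G w (transfer y T N) := by
    refine isCover_transfer hA hy.1 (fun u hu => (hT' u hu).2.1) fun u hu v he htight => ?_
    refine Finset.mem_biUnion.2 ⟨u, hu, Finset.mem_filter.2 ⟨?_, ?_⟩⟩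
    · exact mem_verts.2 ⟨_, he, Sym2.mem_mk_right _ _⟩
    · exact Finset.mem_filter.2 ⟨he, htight⟩
  have hsum := sum_transfer_add_card (fun u hu => (hT' u hu).1) (fun v hv => (hN v hv).1) hTN
    fun u hu => (hT' u hu).2.2
  have := hy.2 _ hcover
  omega

theorem IsMinCover.exists_injOn_tight (hA : IsBipartiteWith G A) (hy : IsMinCover G w y) :
    ∃ f : V → V, Set.InjOn f (posSide G y A) ∧
      ∀ u ∈ posSide G y A, s(u, f u) ∈ tightEdges G w y := by
  obtain ⟨f, hf, hft⟩ := Finset.exists_injOn_of_forall_card_le_card_biUnion _ _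
    fun T hT => hy.card_le_card_biUnion_tightNbrs hA hT
  exact ⟨f, hf, fun u hu => (Finset.mem_filter.1 (hft u hu)).2⟩

end MinCover

theorem isMatching_image_mk {A : Set V} {X : Finset V} {f : V → V} (hXA : ∀ a ∈ X, a ∈ A)
    (hfA : ∀ a ∈ X, f a ∉ A) (hf : Set.InjOn f X) : IsMatching (X.image fun a => s(a, f a)) := by
  refine ⟨?_, ?_⟩
  · simp only [Finset.mem_image]
    rintro _ ⟨a, ha, rfl⟩ hdiag
    exact hfA a ha (Sym2.mk_isDiag_iff.1 hdiag ▸ hXA a ha)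
  · simp only [Finset.mem_image]
    rintro _ ⟨a, ha, rfl⟩ _ ⟨a', ha', rfl⟩ hne v hv hv'
    have haa' : a ≠ a' := by rintro rfl; exact hne rfl
    rw [Sym2.mem_iff] at hv hv'
    rcases hv with rfl | rfl <;> rcases hv' with h | h
    · exact haa' h
    · exact hfA a' ha' (h ▸ hXA v ha)
    · exact hfA a ha (h ▸ hXA a' ha')
    · exact haa' (hf ha ha' h)

section AltMatching

variable {X Y : Finset V} {f g : V → V}

inductive AltReach (X Y : Finset V) (f g : V → V) : V → Prop
  | start {a : V} : a ∈ X → (∀ b ∈ Y, g b ≠ a) → AltReach X Y f g a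
  | step {a : V} : AltReach X Y f g a → a ∈ X → f a ∈ Y → AltReach X Y f g (g (f a))

/-- The Mendelsohn–Dulmage combination of the matchings `a — f a` (`a ∈ X`) and `b — g b`
(`b ∈ Y`). -/
def altMatching (X Y : Finset V) (f g : V → V) : Finset (Sym2 V) :=
  (X.filter (AltReach X Y f g)).image (fun a => s(a, f a)) ∪
    (Y.filter fun b => ¬ AltReach X Y f g (g b)).image fun b => s(b, g b)

theorem altMatching_subset {H : Finset (Sym2 V)} (hfH : ∀ a ∈ X, s(a, f a) ∈ H)
    (hgH : ∀ b ∈ Y, s(b, g b) ∈ H) : altMatching X Y f g ⊆ H := by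
  refine Finset.union_subset ?_ ?_ <;> refine Finset.image_subset_iff.2 fun v hv => ?_
  exacts [hfH v (Finset.mem_filter.1 hv).1, hgH v (Finset.mem_filter.1 hv).1]

theorem isMatching_altMatching {A : Set V} (hXA : ∀ a ∈ X, a ∈ A) (hfA : ∀ a ∈ X, f a ∉ A)
    (hf : Set.InjOn f X) (hYA : ∀ b ∈ Y, b ∉ A) (hgA : ∀ b ∈ Y, g b ∈ A) (hg : Set.InjOn g Y) :
    IsMatching (altMatching X Y f g) := by
  refine isMatching_union ?_ ?_ ?_
  · exact isMatching_image_mk (fun a ha => hXA a (Finset.mem_filter.1 ha).1)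
      (fun a ha => hfA a (Finset.mem_filter.1 ha).1)
      (hf.mono (Finset.coe_subset.2 (Finset.filter_subset _ _)))
  · exact isMatching_image_mk (A := Aᶜ) (fun b hb => hYA b (Finset.mem_filter.1 hb).1)
      (fun b hb => not_not.2 (hgA b (Finset.mem_filter.1 hb).1))
      (hg.mono (Finset.coe_subset.2 (Finset.filter_subset _ _)))
  simp only [Finset.mem_image, Finset.mem_filter]
  rintro _ ⟨a, ⟨ha, hRa⟩, rfl⟩ _ ⟨b, ⟨hb, hRb⟩, rfl⟩ v hv hv'
  rw [Sym2.mem_iff] at hv hv'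
  rcases hv with rfl | rfl <;> rcases hv' with h | h
  · exact hYA b hb (h ▸ hXA v ha)
  · exact hRb (h ▸ hRa)
  · exact hRb (h ▸ AltReach.step hRa ha (h ▸ hb))
  · exact hfA a ha (h ▸ hgA b hb)

theorem exists_mem_altMatching (hg : Set.InjOn g Y) {v : V} (hv : v ∈ X ∪ Y) :
    ∃ e ∈ altMatching X Y f g, v ∈ e := by
  simp only [altMatching, Finset.mem_union, Finset.mem_image, Finset.mem_filter]
  rcases Finset.mem_union.1 hv with hvX | hvY
  · by_cases hR : AltReach X Y f g v
    · exact ⟨_, Or.inl ⟨v, ⟨hvX, hR⟩, rfl⟩, Sym2.mem_mk_left _ _⟩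
    · obtain ⟨b, hb, rfl⟩ : ∃ b ∈ Y, g b = v := by
        by_contra! h
        exact hR (.start hvX h)
      exact ⟨_, Or.inr ⟨b, ⟨hb, hR⟩, rfl⟩, Sym2.mem_mk_right _ _⟩
  · by_cases hR : AltReach X Y f g (g v)
    · generalize hu : g v = u at hR
      cases hR with
      | start _ hnot => exact absurd hu (hnot v hvY)
      | @step a hRa ha hfa =>
        obtain rfl := hg hvY hfa hu
        exact ⟨_, Or.inl ⟨a, ⟨ha, hRa⟩, rfl⟩, Sym2.mem_mk_right _ _⟩
    · exact ⟨_, Or.inr ⟨v, ⟨hvY, hR⟩, rfl⟩, Sym2.mem_mk_left _ _⟩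

end AltMatching

/-- Egerváry's theorem: by Hall's theorem the tight subgraph of a minimum cover has a matching
saturating the positive vertices of either side, and these two combine into one
saturating all of them. -/
theorem IsMinCover.exists_isMatching_sum_eq {G : Finset (Sym2 V)} {w : Sym2 V → ℕ} {y : V → ℕ}
    {A : Set V} (hA : IsBipartiteWith G A) (hy : IsMinCover G w y) :
    ∃ M ⊆ G, IsMatching M ∧ ∑ e ∈ M, w e = ∑ v ∈ verts G, y v := by
  obtain ⟨f, hf, hfT⟩ := hy.exists_injOn_tight hA
  obtain ⟨g, hg, hgT⟩ := hy.exists_injOn_tight hA.compl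
  have hT : IsBipartiteWith (tightEdges G w y) A := hA.mono (Finset.filter_subset _ G)
  have hXA : ∀ a ∈ posSide G y A, a ∈ A := fun a ha => (mem_posSide.1 ha).2.1
  have hYA : ∀ b ∈ posSide G y Aᶜ, b ∉ A := fun b hb => (mem_posSide.1 hb).2.1
  set M := altMatching (posSide G y A) (posSide G y Aᶜ) f g
  have hMT : M ⊆ tightEdges G w y := altMatching_subset hfT hgT
  have hMG : M ⊆ G := hMT.trans (Finset.filter_subset _ _)
  have hM : IsMatching M :=
    isMatching_altMatching hXA (fun a ha => hT.not_mem_of_mk_mem (hfT a ha) (hXA a ha)) hf hYA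
      (fun b hb => not_not.1 (hT.compl.not_mem_of_mk_mem (hgT b hb) (hYA b hb))) hg
  refine ⟨M, hMG, hM, ?_⟩
  calc ∑ e ∈ M, w e = ∑ e ∈ M, pairSum y e :=
        Finset.sum_congr rfl fun e he => (Finset.mem_filter.1 (hMT he)).2
    _ = ∑ v ∈ verts M, y v := hM.sum_pairSum y
    _ = ∑ v ∈ verts G, y v := by
      refine Finset.sum_subset (verts_mono hMG) fun v hvG hvM => ?_
      by_contra hy0
      have hv : v ∈ posSide G y A ∪ posSide G y Aᶜ := by
        by_cases hvA : v ∈ A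
        · exact Finset.mem_union_left _ (mem_posSide.2 ⟨hvG, hvA, Nat.pos_of_ne_zero hy0⟩)
        · exact Finset.mem_union_right _ (mem_posSide.2 ⟨hvG, hvA, Nat.pos_of_ne_zero hy0⟩)
      obtain ⟨e, he, hve⟩ := exists_mem_altMatching hg hv
      exact hvM (mem_verts.2 ⟨e, he, hve⟩)

theorem unfolding_preserves_matching_weight_general
    (G : Finset (Sym2 V)) (w : Sym2 V → ℕ)
    (hG : ∀ e ∈ G, ¬ e.IsDiag)
    (hbip : IsBipartite G) :
    matchWeight G w = matchNum (unfoldGraph G w) := by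
  obtain ⟨A, hA⟩ := hbip
  obtain ⟨y, hy⟩ := exists_isMinCover G w
  obtain ⟨M₀, hM₀G, hM₀, hM₀y⟩ := hy.exists_isMatching_sum_eq hA
  refine le_antisymm (matchWeight_le fun M hMG hM => ?_) (matchNum_le fun N hN hNm => ?_)
  · rw [← card_biUnion_unfoldEdge hG hMG hM]
    exact le_matchNum (biUnion_unfoldEdge_subset hMG) (isMatching_biUnion_unfoldEdge hG hMG hM)
  · calc N.card ≤ ∑ v ∈ verts G, y v := hNm.card_le_sum_of_isCover hN hy.1
      _ = ∑ e ∈ M₀, w e := hM₀y.symm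
      _ ≤ matchWeight G w := le_matchWeight hM₀G hM₀

/-- For a weighted bipartite graph `G` with positive integral weights,
the maximum matching weight of `G` equals the maximum matching cardinality of its
unfolding φ(G). -/
theorem unfolding_preserves_matching_weight
    (G : Finset (Sym2 V)) (w : Sym2 V → ℕ)
    (hG : ∀ e ∈ G, ¬ e.IsDiag) (hpos : ∀ e ∈ G, 0 < w e)
    (hbip : IsBipartite G) :
    matchWeight G w = matchNum (unfoldGraph G w) :=
  unfolding_preserves_matching_weight_general G w hG hbip
end
end

section
/- There exists a weighted non-bipartite graph G and a subgraph H of its unfolding φ(G) such that μ_w(R(H)) < μ(H). Concretely, let G be the triangle on vertices x,y,z with all three edge weights equal to 2, and let H = {(x^1,z^2), (z^1,y^2), (y^1,x^2)} ⊆ φ(G). Then μ(H) = 3 but μ_w(R(H)) = 2. -/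
/-!
Orient the triangle as the cycle x → z → y → x and take, for each arc (u, v), the copy (u¹, v²)
of the edge uv in φ(G). Every vertex copy is used exactly once, so these three edges form a
matching and μ(H) = 3. But they are copies of all three sides of the triangle, so R(H) is the
whole triangle, in which any two edges meet: a matching of R(H) has at most one edge, and
μ_w(R(H)) = 2.
-/

open scoped Classical BigOperators

noncomputable section

variable {V : Type*}

theorem Sym2.out_mk {α : Type*} (a b : α) : s(a, b).out = (a, b) ∨ s(a, b).out = (b, a) := by
  have h : s(s(a, b).out.1, s(a, b).out.2) = s(a, b) := Quot.out_eq _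
  rcases Sym2.eq_iff.1 h with ⟨h₁, h₂⟩ | ⟨h₁, h₂⟩
  exacts [.inl (Prod.ext h₁ h₂), .inr (Prod.ext h₁ h₂)]

section Matching

variable {G M : Finset (Sym2 V)}

theorem isMatching_singleton {e : Sym2 V} (he : ¬ e.IsDiag) : IsMatching {e} :=
  ⟨by simpa using he, by simp +contextual⟩

theorem IsMatching.two_mul_card_le [Fintype V] (hM : IsMatching M) :
    2 * M.card ≤ Fintype.card V := by
  have hdisj : (M : Set (Sym2 V)).PairwiseDisjoint Sym2.toFinset := fun e he f hf hef =>
    Finset.disjoint_left.2 fun v hve hvf =>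
      hM.2 e he f hf hef v (Sym2.mem_toFinset.1 hve) (Sym2.mem_toFinset.1 hvf)
  calc 2 * M.card = (M.biUnion Sym2.toFinset).card := by
        rw [Finset.card_biUnion hdisj, Finset.sum_congr rfl fun e he =>
          Sym2.card_toFinset_of_not_isDiag e (hM.1 e he), Finset.sum_const, smul_eq_mul, mul_comm]
    _ ≤ Fintype.card V := Finset.card_le_univ _

variable (G) in
theorem isGreatest_matchNum :
    IsGreatest {k | ∃ M, M ⊆ G ∧ IsMatching M ∧ M.card = k} (matchNum G) := by
  have hne : {k | ∃ M, M ⊆ G ∧ IsMatching M ∧ M.card = k}.Nonempty :=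
    ⟨0, ∅, Finset.empty_subset G, by simp [IsMatching], rfl⟩
  have hbdd : BddAbove {k | ∃ M, M ⊆ G ∧ IsMatching M ∧ M.card = k} :=
    ⟨G.card, by rintro _ ⟨M, hMG, -, rfl⟩; exact Finset.card_le_card hMG⟩
  exact ⟨Nat.sSup_mem hne hbdd, fun _ hk => le_csSup hbdd hk⟩

theorem card_le_matchNum (hMG : M ⊆ G) (hM : IsMatching M) : M.card ≤ matchNum G :=
  (isGreatest_matchNum G).2 ⟨M, hMG, hM, rfl⟩

theorem matchNum_eq_card (hG : IsMatching G) : matchNum G = G.card :=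
  IsGreatest.csSup_eq
    ⟨⟨G, subset_rfl, hG, rfl⟩, by rintro _ ⟨M, hMG, -, rfl⟩; exact Finset.card_le_card hMG⟩

variable (G) in
theorem two_mul_matchNum_le [Fintype V] : 2 * matchNum G ≤ Fintype.card V := by
  obtain ⟨M, -, hM, hcard⟩ := (isGreatest_matchNum G).1
  exact hcard ▸ hM.two_mul_card_le

variable (G) in
theorem matchWeight_const (c : ℕ) : matchWeight G (fun _ => c) = c * matchNum G := by
  have himage : {s | ∃ M, M ⊆ G ∧ IsMatching M ∧ ∑ _ ∈ M, c = s} =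
      (c * ·) '' {k | ∃ M, M ⊆ G ∧ IsMatching M ∧ M.card = k} := by
    ext s
    simp [mul_comm c, and_assoc]
  rw [matchWeight, himage]
  have hmono : Monotone (c * ·) := fun _ _ h => Nat.mul_le_mul_left c h
  exact (hmono.map_isGreatest (isGreatest_matchNum G)).csSup_eq

theorem matchNum_eq_one_of_card_eq_three [Fintype V] (hV : Fintype.card V = 3) {e : Sym2 V}
    (he : e ∈ G) (hdiag : ¬ e.IsDiag) : matchNum G = 1 := by
  have hle := two_mul_matchNum_le G
  have hge := card_le_matchNum (Finset.singleton_subset_iff.2 he) (isMatching_singleton hdiag)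
  rw [Finset.card_singleton] at hge
  omega

end Matching

theorem not_isBipartite_of_triangle {G : Finset (Sym2 V)} {a b c : V}
    (hab : s(a, b) ∈ G) (hbc : s(b, c) ∈ G) (hac : s(a, c) ∈ G) : ¬ IsBipartite G := by
  rintro ⟨A, hA⟩
  have side : ∀ {u v}, s(u, v) ∈ G → (u ∈ A ↔ v ∉ A) := by
    intro u v huv
    obtain ⟨p, q, he, hp, hq⟩ := hA _ huv
    rcases Sym2.eq_iff.1 he with ⟨rfl, rfl⟩ | ⟨rfl, rfl⟩ <;> tauto
  have := side hab
  have := side hbc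
  have := side hac
  tauto

theorem mk_mem_unfoldEdge (w : Sym2 V → ℕ) (a b : V) {i : ℕ} (h₁ : 1 ≤ i) (h₂ : i ≤ w s(a, b)) :
    s((a, i), (b, w s(a, b) + 1 - i)) ∈ unfoldEdge w s(a, b) := by
  rw [unfoldEdge, Finset.mem_image]
  -- `unfoldEdge` orients the edge by `Sym2.out`; against the other orientation it is copy w + 1 - i.
  rcases Sym2.out_mk a b with h | h
  · exact ⟨i, Finset.mem_Icc.2 ⟨h₁, h₂⟩, by rw [h]⟩
  · refine ⟨w s(a, b) + 1 - i, Finset.mem_Icc.2 ⟨by omega, by omega⟩, ?_⟩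
    rw [h, Nat.sub_sub_self (by omega), Sym2.eq_swap]

theorem subset_unfoldGraph {G : Finset (Sym2 V)} {w : Sym2 V → ℕ} {H : Finset (Sym2 (V × ℕ))}
    (h : ∀ f ∈ H, ∃ e ∈ G, f ∈ unfoldEdge w e) : H ⊆ unfoldGraph G w :=
  fun f hf => Finset.mem_biUnion.2 (h f hf)

theorem refold_eq_self {G : Finset (Sym2 V)} {w : Sym2 V → ℕ} {H : Finset (Sym2 (V × ℕ))}
    (h : ∀ e ∈ G, ∃ f ∈ unfoldEdge w e, f ∈ H) : refold G w H = G :=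
  Finset.filter_true_of_mem h

/-- Refolding does not preserve matching size for non-bipartite graphs:
for the triangle `G` on x=0, y=1, z=2 with all edge weights 2, and the subgraph
H = {(x¹,z²), (z¹,y²), (y¹,x²)} of φ(G), we have μ(H) = 3 but μ_w(R(H)) = 2. -/
theorem refolding_fails_nonbipartite :
    ∃ (G : Finset (Sym2 (Fin 3))) (w : Sym2 (Fin 3) → ℕ)
      (H : Finset (Sym2 (Fin 3 × ℕ))),
      G = {s((0 : Fin 3), (1 : Fin 3)), s((1 : Fin 3), (2 : Fin 3)),
            s((0 : Fin 3), (2 : Fin 3))} ∧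
      (∀ e, w e = 2) ∧
      ¬ IsBipartite G ∧
      H = {s(((0 : Fin 3), 1), ((2 : Fin 3), 2)),
            s(((2 : Fin 3), 1), ((1 : Fin 3), 2)),
            s(((1 : Fin 3), 1), ((0 : Fin 3), 2))} ∧
      H ⊆ unfoldGraph G w ∧
      matchNum H = 3 ∧
      matchWeight (refold G w H) w = 2 ∧
      matchWeight (refold G w H) w < matchNum H := by
  set G : Finset (Sym2 (Fin 3)) := {s(0, 1), s(1, 2), s(0, 2)}
  set H : Finset (Sym2 (Fin 3 × ℕ)) := {s((0, 1), (2, 2)), s((2, 1), (1, 2)), s((1, 1), (0, 2))}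
  have copy (a b : Fin 3) : s((a, 1), (b, 2)) ∈ unfoldEdge (fun _ => 2) s(a, b) :=
    mk_mem_unfoldEdge _ a b le_rfl one_le_two
  have hHG : ∀ f ∈ H, ∃ e ∈ G, f ∈ unfoldEdge (fun _ => 2) e := by
    simp only [H, Finset.mem_insert, Finset.mem_singleton]
    rintro f (rfl | rfl | rfl)
    exacts [⟨_, by simp [G], copy 0 2⟩, ⟨_, by simp [G, Sym2.eq_swap], copy 2 1⟩,
      ⟨_, by simp [G, Sym2.eq_swap], copy 1 0⟩]
  have hGH : ∀ e ∈ G, ∃ f ∈ unfoldEdge (fun _ => 2) e, f ∈ H := by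
    simp only [G, Finset.mem_insert, Finset.mem_singleton]
    rintro e (rfl | rfl | rfl)
    exacts [⟨_, Sym2.eq_swap ▸ copy 1 0, by simp [H]⟩, ⟨_, Sym2.eq_swap ▸ copy 2 1, by simp [H]⟩,
      ⟨_, copy 0 2, by simp [H]⟩]
  have hH : IsMatching H := by
    refine ⟨by simp [H], ?_⟩
    simp only [H, Finset.mem_insert, Finset.mem_singleton]
    rintro e (rfl | rfl | rfl) f (rfl | rfl | rfl) hef v <;> simp_all [Prod.ext_iff] <;> omega
  have hG : matchNum G = 1 :=
    matchNum_eq_one_of_card_eq_three (Fintype.card_fin 3) (show s(0, 1) ∈ G by simp [G]) (by decide)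
  have hμ : matchNum H = 3 := (matchNum_eq_card hH).trans (by decide)
  have hμw : matchWeight (refold G (fun _ => 2) H) (fun _ => 2) = 2 := by
    rw [refold_eq_self hGH, matchWeight_const, hG]
  refine ⟨G, fun _ => 2, H, rfl, fun _ => rfl, ?_, rfl, subset_unfoldGraph hHG, hμ, hμw, by omega⟩
  exact not_isBipartite_of_triangle (a := 0) (b := 1) (c := 2) (by simp [G]) (by simp [G])
    (by simp [G])
end
end

section
/- Let X_1,...,X_n be negatively associated random variables taking values in [0,1], let X = Σ X_i and μ = E[X]. Then for any 0 < δ < 1, Pr[X ≤ μ(1−δ)] ≤ exp(−μδ²/2). -/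
/-! Chernoff's method with the negative parameter `t = log (1 - δ)`. The maps `x ↦ exp (t * x i)`
are antitone, so negative association bounds the moment generating function of the sum by the
product of the individual ones, just as independence would. Convexity of `exp` bounds each factor
by `exp ((exp t - 1) * E[X i])`, and the exponent `-m (1 - δ) log (1 - δ) - m δ` obtained from
Markov's inequality, where `m = E[∑ i, X i]`, is at most `-m δ² / 2`. -/

open MeasureTheory
open scoped BigOperators

noncomputable section

/-- `f` depends only on the coordinates in `I`. -/
def DependsOnlyOn {n : ℕ} (f : (Fin n → ℝ) → ℝ) (I : Finset (Fin n)) : Prop :=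
  ∀ x y : Fin n → ℝ, (∀ i ∈ I, x i = y i) → f x = f y

/-- Negative association: for all disjoint index sets `I`, `J` and coordinatewise
non-decreasing functions `f` of the variables in `I` and `g` of the variables in `J`,
E[f·g] ≤ E[f]·E[g] (whenever the relevant expectations exist). -/
def NegAssoc {Ω : Type*} [MeasurableSpace Ω] (P : Measure Ω) {n : ℕ}
    (X : Fin n → Ω → ℝ) : Prop :=
  ∀ I J : Finset (Fin n), Disjoint I J →
    ∀ f g : (Fin n → ℝ) → ℝ, Monotone f → Monotone g →
      DependsOnlyOn f I → DependsOnlyOn g J →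
      Integrable (fun ω => f fun i => X i ω) P →
      Integrable (fun ω => g fun i => X i ω) P →
      Integrable (fun ω => (f fun i => X i ω) * (g fun i => X i ω)) P →
      ∫ ω, (f fun i => X i ω) * (g fun i => X i ω) ∂P ≤
        (∫ ω, (f fun i => X i ω) ∂P) * ∫ ω, (g fun i => X i ω) ∂P

open ProbabilityTheory Real

theorem Real.neg_add_sq_div_two_le_one_sub_mul_log_one_sub {δ : ℝ} (h0 : 0 ≤ δ) (h1 : δ ≤ 1) :
    -δ + δ ^ 2 / 2 ≤ (1 - δ) * log (1 - δ) := by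
  let h : ℝ → ℝ := fun x => (1 - x) * log (1 - x) + x - x ^ 2 / 2
  have hderiv : ∀ x ∈ Set.Ioo (0 : ℝ) 1, HasDerivAt h (-log (1 - x) - x) x := by
    intro x hx
    have hmul_log :=
      (hasDerivAt_mul_log (sub_pos.2 hx.2).ne').comp x ((hasDerivAt_id x).const_sub 1)
    refine ((hmul_log.add (hasDerivAt_id x)).sub
      ((hasDerivAt_pow 2 x).div_const 2)).congr_deriv ?_
    norm_num
  have hmono : MonotoneOn h (Set.Icc 0 1) := by
    refine monotoneOn_of_hasDerivWithinAt_nonneg (f' := fun x => -log (1 - x) - x)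
      (convex_Icc 0 1) ?_ (fun x hx => ?_) (fun x hx => ?_)
    · exact (((continuous_const.sub continuous_id).mul_log).add continuous_id |>.sub
        ((continuous_pow 2).div_const 2)).continuousOn
    · rw [interior_Icc] at hx ⊢
      exact (hderiv x hx).hasDerivWithinAt
    · rw [interior_Icc] at hx
      linarith [log_le_sub_one_of_pos (sub_pos.2 hx.2)]
  have := hmono ⟨le_rfl, zero_le_one⟩ ⟨h0, h1⟩ h0
  simp only [h, sub_zero, log_one, mul_zero] at this
  linarith

section Mgf

variable {Ω : Type*} [MeasurableSpace Ω] {μ : Measure Ω} {Y : Ω → ℝ}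

theorem integrable_exp_mul_of_nonpos_of_nonneg [IsFiniteMeasure μ] (hY : Measurable Y)
    (hY0 : ∀ ω, 0 ≤ Y ω) {t : ℝ} (ht : t ≤ 0) : Integrable (fun ω => exp (t * Y ω)) μ :=
  .of_mem_Icc 0 1 (by fun_prop) <| ae_of_all _ fun ω =>
    ⟨(exp_pos _).le, exp_le_one_iff.2 (mul_nonpos_of_nonpos_of_nonneg ht (hY0 ω))⟩

theorem mgf_le_exp_mul_integral [IsProbabilityMeasure μ] (hY : Measurable Y)
    (hY01 : ∀ ω, Y ω ∈ Set.Icc (0 : ℝ) 1) (t : ℝ) :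
    mgf Y μ t ≤ exp ((exp t - 1) * μ[Y]) := by
  have hchord : ∀ ω, exp (t * Y ω) ≤ 1 + (exp t - 1) * Y ω := fun ω => by
    have h := convexOn_exp.2 (Set.mem_univ 0) (Set.mem_univ t) (sub_nonneg.2 (hY01 ω).2)
      (hY01 ω).1 (sub_add_cancel 1 (Y ω))
    simp only [smul_eq_mul, mul_zero, zero_add, exp_zero, mul_one] at h
    rw [mul_comm t]
    linarith
  have hY_int : Integrable Y μ := .of_mem_Icc 0 1 hY.aemeasurable (ae_of_all _ hY01)
  calc mgf Y μ t ≤ ∫ ω, 1 + (exp t - 1) * Y ω ∂μ :=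
        integral_mono (integrable_exp_mul_of_mem_Icc hY.aemeasurable (ae_of_all _ hY01))
          ((integrable_const 1).add (hY_int.const_mul _)) hchord
    _ = 1 + (exp t - 1) * μ[Y] := by
        rw [integral_add (integrable_const 1) (hY_int.const_mul _), integral_const_mul]
        simp
    _ ≤ exp ((exp t - 1) * μ[Y]) := by linarith [add_one_le_exp ((exp t - 1) * μ[Y])]

end Mgf

namespace NegAssoc

variable {Ω : Type*} [MeasurableSpace Ω] {P : Measure Ω} {n : ℕ} {X : Fin n → Ω → ℝ}

theorem integral_mul_le_of_antitone (hNA : NegAssoc P X) {I J : Finset (Fin n)}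
    (hIJ : Disjoint I J) {f g : (Fin n → ℝ) → ℝ} (hf : Antitone f) (hg : Antitone g)
    (hfI : DependsOnlyOn f I) (hgJ : DependsOnlyOn g J)
    (hf_int : Integrable (fun ω => f fun i => X i ω) P)
    (hg_int : Integrable (fun ω => g fun i => X i ω) P)
    (hfg_int : Integrable (fun ω => (f fun i => X i ω) * (g fun i => X i ω)) P) :
    ∫ ω, (f fun i => X i ω) * (g fun i => X i ω) ∂P ≤
      (∫ ω, (f fun i => X i ω) ∂P) * ∫ ω, (g fun i => X i ω) ∂P := by
  have h := hNA I J hIJ (-f) (-g) hf.neg hg.neg (fun x y hxy => by simp [hfI x y hxy])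
    (fun x y hxy => by simp [hgJ x y hxy]) hf_int.neg hg_int.neg (by simpa using hfg_int)
  simpa [integral_neg] using h

theorem mgf_sum_le_prod_mgf [IsProbabilityMeasure P] (hNA : NegAssoc P X)
    (hmeas : ∀ i, Measurable (X i)) (hX0 : ∀ i ω, 0 ≤ X i ω) {t : ℝ} (ht : t ≤ 0)
    (s : Finset (Fin n)) :
    mgf (fun ω => ∑ i ∈ s, X i ω) P t ≤ ∏ i ∈ s, mgf (X i) P t := by
  have hint : ∀ s : Finset (Fin n), Integrable (fun ω => exp (t * ∑ i ∈ s, X i ω)) P :=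
    fun s => integrable_exp_mul_of_nonpos_of_nonneg (by fun_prop)
      (fun ω => Finset.sum_nonneg fun i _ => hX0 i ω) ht
  induction s using Finset.induction_on with
  | empty => simp [mgf]
  | insert a s ha ih =>
    have hsplit : (fun ω => exp (t * X a ω) * exp (t * ∑ i ∈ s, X i ω)) =
        fun ω => exp (t * ∑ i ∈ insert a s, X i ω) := by
      ext ω
      rw [Finset.sum_insert ha, mul_add, exp_add]
    have h := hNA.integral_mul_le_of_antitone (Finset.disjoint_singleton_left.2 ha)
      (f := fun x => exp (t * x a)) (g := fun x => exp (t * ∑ i ∈ s, x i))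
      (fun x y hxy => exp_le_exp.2 (mul_le_mul_of_nonpos_left (hxy a) ht))
      (fun x y hxy => exp_le_exp.2
        (mul_le_mul_of_nonpos_left (Finset.sum_le_sum fun i _ => hxy i) ht))
      (fun x y hxy => congrArg (fun z => exp (t * z)) (hxy a (Finset.mem_singleton_self a)))
      (fun x y hxy => congrArg (fun z => exp (t * z)) (Finset.sum_congr rfl hxy))
      (integrable_exp_mul_of_nonpos_of_nonneg (hmeas a) (hX0 a) ht) (hint s)
      (hsplit ▸ hint (insert a s))
    calc mgf (fun ω => ∑ i ∈ insert a s, X i ω) P t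
        ≤ mgf (X a) P t * mgf (fun ω => ∑ i ∈ s, X i ω) P t := by
          rw [mgf, ← hsplit]
          exact h
      _ ≤ mgf (X a) P t * ∏ i ∈ s, mgf (X i) P t := mul_le_mul_of_nonneg_left ih mgf_nonneg
      _ = ∏ i ∈ insert a s, mgf (X i) P t := by rw [Finset.prod_insert ha]

end NegAssoc

/-- lower-tail Chernoff bound for negatively associated random variables
with values in [0,1]: Pr[X ≤ μ(1−δ)] ≤ exp(−μδ²/2), where X = Σ X_i and μ = E[X]. -/
theorem chernoff_negatively_associated
    {Ω : Type*} [MeasurableSpace Ω] (P : Measure Ω) [IsProbabilityMeasure P]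
    {n : ℕ} (X : Fin n → Ω → ℝ)
    (hmeas : ∀ i, Measurable (X i))
    (hbdd : ∀ i, ∀ ω, X i ω ∈ Set.Icc (0 : ℝ) 1)
    (hNA : NegAssoc P X)
    (δ : ℝ) (hδ0 : 0 < δ) (hδ1 : δ < 1) :
    (P {ω | ∑ i, X i ω ≤ (∫ ω, ∑ i, X i ω ∂P) * (1 - δ)}).toReal ≤
      Real.exp (-(∫ ω, ∑ i, X i ω ∂P) * δ ^ 2 / 2) := by
  set m := ∫ ω, ∑ i, X i ω ∂P
  have hm : m = ∑ i, P[X i] := integral_finsetSum _ fun i _ =>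
    .of_mem_Icc 0 1 (hmeas i).aemeasurable (ae_of_all _ (hbdd i))
  have hm0 : 0 ≤ m := integral_nonneg fun ω => Finset.sum_nonneg fun i _ => (hbdd i ω).1
  set t := log (1 - δ)
  have ht : t ≤ 0 := log_nonpos (by linarith) (by linarith)
  have hexp_t : exp t = 1 - δ := exp_log (by linarith)
  have hmgf : mgf (fun ω => ∑ i, X i ω) P t ≤ exp (-δ * m) := calc
    _ ≤ ∏ i, mgf (X i) P t := hNA.mgf_sum_le_prod_mgf hmeas (fun i ω => (hbdd i ω).1) ht _
    _ ≤ ∏ i, exp ((exp t - 1) * P[X i]) := Finset.prod_le_prod (fun _ _ => mgf_nonneg)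
        fun i _ => mgf_le_exp_mul_integral (hmeas i) (hbdd i) t
    _ = exp (-δ * m) := by rw [← exp_sum, ← Finset.mul_sum, ← hm, hexp_t]; ring_nf
  have hlog := Real.neg_add_sq_div_two_le_one_sub_mul_log_one_sub hδ0.le hδ1.le
  calc (P {ω | ∑ i, X i ω ≤ m * (1 - δ)}).toReal
      ≤ exp (-t * (m * (1 - δ))) * mgf (fun ω => ∑ i, X i ω) P t :=
        measure_le_le_exp_mul_mgf _ ht <| integrable_exp_mul_of_nonpos_of_nonneg (by fun_prop)
          (fun ω => Finset.sum_nonneg fun i _ => (hbdd i ω).1) ht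
    _ ≤ exp (-t * (m * (1 - δ))) * exp (-δ * m) := by gcongr
    _ ≤ exp (-m * δ ^ 2 / 2) := by
        rw [← exp_add, exp_le_exp]
        nlinarith [mul_le_mul_of_nonneg_left hlog hm0]
end
end

section
/- With the setup of the bipartification step: let H ⊆ φ(G) have bounded edge-degree β, M* a matching of G_S, G̃ the bipartite subgraph from the bipartification lemma with parameter δ = λ/2 and degree bound d = β, H̃ = H ∩ φ(G̃), and Ũ = U ∩ φ(M*) where U consists of underfull edges (those with deg_H(u)+deg_H(v) < β(1−λ)). Assume λβ ≥ 2. Then H̃ ∪ Ũ is a (β', λ')-EDCS of H̃ ∪ φ(M*) with β' = β/2 + βλ + 2 and λ' = 8λ. -/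
/-! Adding the matching part Ũ raises each degree of H̃ by at most one, and deg_{H̃} is
deg_H / 2 up to λβ/2, so every edge-degree in H̃ ∪ Ũ is half the edge-degree in H up to
λβ + 2. Edges of H have H-edge-degree at most β, edges of φ(M*) outside U more than
(1 − λ)β, and the additive slack 2 is absorbed by λβ ≥ 2. -/

open scoped Classical BigOperators

noncomputable section

variable {V : Type*}

theorem IsMatching.mono {M N : Finset (Sym2 V)} (hM : IsMatching M) (hNM : N ⊆ M) :
    IsMatching N :=
  ⟨fun e he => hM.1 e (hNM he), fun e he f hf => hM.2 e (hNM he) f (hNM hf)⟩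

theorem IsMatching.deg_le_one {M : Finset (Sym2 V)} (hM : IsMatching M) (v : V) :
    deg M v ≤ 1 :=
  Finset.card_le_one.mpr fun e he f hf => by
    rw [Finset.mem_filter] at he hf
    by_contra hne
    exact hM.2 e he.1 f hf.1 hne v he.2 hf.2

theorem deg_mono {A B : Finset (Sym2 V)} (hAB : A ⊆ B) (v : V) : deg A v ≤ deg B v :=
  Finset.card_le_card (Finset.filter_subset_filter _ hAB)

theorem deg_union_le (A B : Finset (Sym2 V)) (v : V) : deg (A ∪ B) v ≤ deg A v + deg B v := by
  unfold deg
  rw [Finset.filter_union]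
  exact Finset.card_union_le _ _

theorem IsMatching.deg_union_le_add_one {M : Finset (Sym2 V)} (hM : IsMatching M)
    (A : Finset (Sym2 V)) (v : V) : deg (A ∪ M) v ≤ deg A v + 1 :=
  (deg_union_le A M v).trans (Nat.add_le_add_left (hM.deg_le_one v) _)

theorem degSum_le_half_add {X H : Finset (Sym2 V)} {c : ℝ}
    (hdeg : ∀ v, (deg X v : ℝ) ≤ deg H v / 2 + c) (e : Sym2 V) :
    (degSum X e : ℝ) ≤ degSum H e / 2 + 2 * c := by
  unfold degSum
  push_cast
  linarith [hdeg e.out.1, hdeg e.out.2]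

theorem half_sub_le_degSum {X H : Finset (Sym2 V)} {c : ℝ}
    (hdeg : ∀ v, (deg H v : ℝ) / 2 - c ≤ deg X v) (e : Sym2 V) :
    (degSum H e : ℝ) / 2 - 2 * c ≤ degSum X e := by
  unfold degSum
  push_cast
  linarith [hdeg e.out.1, hdeg e.out.2]

/-- in the bipartification setup (H of bounded edge-degree β; every edge
of U has edge-degree ≤ (1−λ)β in H; every edge of φ(M*) \ U has edge-degree > (1−λ)β
in H; H̃ ⊆ H with |deg_{H̃}(v) − deg_H(v)/2| ≤ (λ/2)β for all v; φ(M*) a matching;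
λβ ≥ 2), the graph H̃ ∪ Ũ with Ũ = U ∩ φ(M*) is a (β',λ')-EDCS of H̃ ∪ φ(M*), where
β' = β/2 + βλ + 2 and λ' = 8λ. -/
theorem bipartified_edcs
    {α : Type*} (β lam : ℝ) (hlam : 0 < lam) (hlb : lam * β ≥ 2)
    (H Ht U Mphi : Finset (Sym2 α))
    (hHt : Ht ⊆ H)
    (hbdd : ∀ e ∈ H, (degSum H e : ℝ) ≤ β)
    (hU : ∀ e ∈ U, (degSum H e : ℝ) ≤ (1 - lam) * β)
    (hMU : ∀ e ∈ Mphi, e ∉ U → (degSum H e : ℝ) > (1 - lam) * β)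
    (hMphi : IsMatching Mphi)
    (hdeg : ∀ v : α, |((deg Ht v : ℝ)) - (deg H v : ℝ) / 2| ≤ (lam / 2) * β) :
    (∀ e ∈ Ht ∪ (U ∩ Mphi),
        (degSum (Ht ∪ (U ∩ Mphi)) e : ℝ) ≤ β / 2 + β * lam + 2) ∧
    (∀ e ∈ Ht ∪ Mphi, e ∉ Ht ∪ (U ∩ Mphi) →
        (degSum (Ht ∪ (U ∩ Mphi)) e : ℝ) ≥ (β / 2 + β * lam + 2) * (1 - 8 * lam)) := by
  have hβ : 0 < β := by nlinarith
  obtain ⟨hHt_lower, hHt_upper⟩ := forall_and.mp fun v => abs_le.mp (hdeg v)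
  have hX_upper : ∀ v, (deg (Ht ∪ (U ∩ Mphi)) v : ℝ) ≤ deg H v / 2 + (lam * β / 2 + 1) := by
    intro v
    have : (deg (Ht ∪ (U ∩ Mphi)) v : ℝ) ≤ deg Ht v + 1 := by
      exact_mod_cast (hMphi.mono (Finset.inter_subset_right (s₁ := U))).deg_union_le_add_one Ht v
    linarith [hHt_upper v]
  have hX_lower : ∀ v, (deg H v : ℝ) / 2 - lam * β / 2 ≤ deg (Ht ∪ (U ∩ Mphi)) v := by
    intro v
    have : (deg Ht v : ℝ) ≤ deg (Ht ∪ (U ∩ Mphi)) v := by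
      exact_mod_cast deg_mono Finset.subset_union_left v
    linarith [hHt_lower v]
  constructor
  · intro e he
    have hHe : (degSum H e : ℝ) ≤ β := by
      rcases Finset.mem_union.mp he with h | h
      · exact hbdd e (hHt h)
      · nlinarith [hU e (Finset.mem_inter.mp h).1]
    linarith [degSum_le_half_add hX_upper e]
  · intro e he heX
    simp only [Finset.mem_union, Finset.mem_inter, not_or, not_and] at he heX
    obtain ⟨heHt, heU⟩ := heX
    have heM : e ∈ Mphi := he.resolve_left heHt
    have hgt := hMU e heM fun h => heU h heM
    nlinarith [half_sub_le_degSum hX_lower e, mul_pos hlam hβ]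
end
end

section
/- Let M* be a matching and let M' ⊆ M* be a random matching that includes each edge of M* independently with probability p. For a vertex u covered by edge e* ∈ M*, conditioned on e* ∉ M', define ŷ on edges incident to u by: ŷ_{e*} = x_{e*}; for any other edge e ∋ u, ŷ_e = (1−p)x_e/p_e if e is not adjacent to M' (which happens with probability p_e/(1−p)) and ŷ_e = 0 otherwise, where p_e is the unconditional probability that e is not adjacent to M' (p_e = (1−p) if e has exactly one endpoint matched by M*, p_e = (1−p)² if both endpoints are matched). Then E[Σ_{e∋u} w_e ŷ_e | e* ∉ M'] = Σ_{e∋u} w_e x_e, and unconditionally E[Σ_{e∋u} w_e ŷ_e] = p·w_{e*} + (1−p)·Σ_{e∋u} w_e x_e. For u not covered by M*, E[Σ_{e∋u} w_e ŷ_e] = (1−p)·Σ_{e∋u} w_e x_e. -/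
open scoped Classical BigOperators

noncomputable section

variable {V : Type*}

open MeasureTheory ProbabilityTheory

/-!
An edge `e ∉ M*` avoids every edge of `M'` exactly when each of the `k ≤ 2` edges of `M*`
touching it is dropped, an event of probability `(1 - p)^k = p_e`; hence `E[ŷ_e] = (1 - p) x_e`.
At a vertex `u` of `e* ∈ M*` every other edge at `u` touches `e*`, so these `ŷ_e` vanish off the
event `e* ∉ M'`, and on that event `ŷ_{e*} = x_{e*}`: integrating over it gives
`(1 - p) Σ_{e ∋ u} w_e x_e`, i.e. the conditional expectation. On the complementary event, of
probability `p`, the sum at `u` is just `w_{e*}`.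
-/

open Finset
open scoped NNReal

lemma measureReal_pi_bernoulli_forall_false {ι : Type*} [Fintype ι] (q : ℝ≥0) (hq : q ≤ 1)
    (S : Finset ι) :
    (Measure.pi fun _ : ι => (PMF.bernoulli q hq).toMeasure).real {ω | ∀ i ∈ S, ω i = false} =
      (1 - q : ℝ) ^ #S := by
  have hS : {ω : ι → Bool | ∀ i ∈ S, ω i = false} = (S : Set ι).pi fun _ => {false} := by
    ext ω; simp
  rw [measureReal_def, hS, Measure.pi_pi_finset, prod_const,
    PMF.toMeasure_apply_singleton _ _ (measurableSet_singleton _), PMF.bernoulli_apply]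
  simp only [cond_false, ENNReal.toReal_pow, ENNReal.coe_toReal, NNReal.coe_sub hq, NNReal.coe_one]

lemma integral_cond_eq_inv_smul_setIntegral {Ω E : Type*} [MeasurableSpace Ω]
    [NormedAddCommGroup E] [NormedSpace ℝ E] (μ : Measure Ω) (s : Set Ω) (f : Ω → E) :
    ∫ ω, f ω ∂μ[|s] = (μ.real s)⁻¹ • ∫ ω in s, f ω ∂μ := by
  rw [ProbabilityTheory.cond, integral_smul_measure, ENNReal.toReal_inv, measureReal_def]

namespace IsMatching

variable {M : Finset (Sym2 V)}

lemma eq_of_mem_of_mem (hM : IsMatching M) {e f : Sym2 V} (he : e ∈ M) (hf : f ∈ M) {v : V}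
    (hve : v ∈ e) (hvf : v ∈ f) : e = f :=
  Classical.byContradiction fun hef => hM.2 e he f hf hef v hve hvf

lemma card_filter_mem (hM : IsMatching M) (v : V) :
    #{i : {f // f ∈ M} | v ∈ (i : Sym2 V)} = if ∃ f ∈ M, v ∈ f then 1 else 0 := by
  split_ifs with hv
  · obtain ⟨f, hf, hvf⟩ := hv
    refine card_eq_one.mpr ⟨⟨f, hf⟩, eq_singleton_iff_unique_mem.mpr ⟨by simpa using hvf, ?_⟩⟩
    exact fun i hi => Subtype.ext (hM.eq_of_mem_of_mem i.2 hf (mem_filter.mp hi).2 hvf)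
  · exact card_eq_zero.mpr (filter_eq_empty_iff.mpr fun i _ hvi => hv ⟨i, i.2, hvi⟩)

lemma notMem_of_ne (hM : IsMatching M) {e f : Sym2 V} (hf : f ∈ M) {v : V} (hve : v ∈ e)
    (hvf : v ∈ f) (hne : e ≠ f) : e ∉ M :=
  fun he => hne (hM.eq_of_mem_of_mem he hf hve hvf)

end IsMatching

def adjEdges (M : Finset (Sym2 V)) (e : Sym2 V) : Finset {f // f ∈ M} :=
  {i | ∃ v, v ∈ e ∧ v ∈ (i : Sym2 V)}

lemma IsMatching.card_adjEdges {M : Finset (Sym2 V)} (hM : IsMatching M) {e : Sym2 V}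
    (he : ¬ e.IsDiag) (heM : e ∉ M) :
    #(adjEdges M e) =
      (if ∃ f ∈ M, e.out.1 ∈ f then 1 else 0) + (if ∃ f ∈ M, e.out.2 ∈ f then 1 else 0) := by
  have he' : s(e.out.1, e.out.2) = e := Quot.out_eq e
  have hne : e.out.1 ≠ e.out.2 := fun h => he (he' ▸ Sym2.mk_isDiag_iff.mpr h)
  rw [← hM.card_filter_mem, ← hM.card_filter_mem, ← card_union_of_disjoint]
  · congr 1
    ext i
    have hmem : ∀ v, v ∈ e ↔ v = e.out.1 ∨ v = e.out.2 := fun v => by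
      nth_rewrite 1 [← he']
      exact Sym2.mem_iff
    simp [adjEdges, hmem, or_and_right, exists_or]
  · refine disjoint_filter.mpr fun i _ h₁ h₂ => heM ?_
    rw [← he', ← (Sym2.mem_and_mem_iff hne).mp ⟨h₁, h₂⟩]
    exact i.2

def keptEdges (M : Finset (Sym2 V)) (ω : {e // e ∈ M} → Bool) : Finset (Sym2 V) :=
  M.filter fun e => ∀ h : e ∈ M, ω ⟨e, h⟩ = true

lemma keptEdges_subset (M : Finset (Sym2 V)) (ω : {e // e ∈ M} → Bool) : keptEdges M ω ⊆ M :=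
  filter_subset _ _

lemma coe_mem_keptEdges {M : Finset (Sym2 V)} {ω : {e // e ∈ M} → Bool} (i : {e // e ∈ M}) :
    (i : Sym2 V) ∈ keptEdges M ω ↔ ω i = true := by
  simp [keptEdges]

def yhatOf (M : Finset (Sym2 V)) (p : ℝ) (x pe : Sym2 V → ℝ) (ω : {e // e ∈ M} → Bool)
    (e : Sym2 V) : ℝ :=
  if e ∈ keptEdges M ω then 1
  else if e ∈ M then x e
  else if ∃ f ∈ keptEdges M ω, ∃ v, v ∈ e ∧ v ∈ f then 0
  else (1 - p) * x e / pe e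

section yhatOf

variable {M : Finset (Sym2 V)} {p : ℝ} {x pe : Sym2 V → ℝ} {ω : {e // e ∈ M} → Bool}
  {e : Sym2 V}

lemma yhatOf_of_mem_keptEdges (he : e ∈ keptEdges M ω) : yhatOf M p x pe ω e = 1 :=
  if_pos he

lemma yhatOf_of_mem_of_notMem_keptEdges (he : e ∈ M) (he' : e ∉ keptEdges M ω) :
    yhatOf M p x pe ω e = x e := by
  rw [yhatOf, if_neg he', if_pos he]

lemma yhatOf_eq_zero_of_adj (he : e ∉ M) {f : Sym2 V} (hf : f ∈ keptEdges M ω) {v : V}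
    (hve : v ∈ e) (hvf : v ∈ f) : yhatOf M p x pe ω e = 0 := by
  rw [yhatOf, if_neg fun h => he (keptEdges_subset M ω h), if_neg he,
    if_pos ⟨f, hf, v, hve, hvf⟩]

lemma yhatOf_of_notMem (he : e ∉ M) :
    yhatOf M p x pe ω e =
      {ω | ∀ i ∈ adjEdges M e, ω i = false}.indicator (fun _ => (1 - p) * x e / pe e) ω := by
  have hfree :
      (¬ ∃ f ∈ keptEdges M ω, ∃ v, v ∈ e ∧ v ∈ f) ↔ ∀ i ∈ adjEdges M e, ω i = false := by
    simp only [adjEdges, mem_filter, mem_univ, true_and, Bool.eq_false_iff, ne_eq,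
      ← coe_mem_keptEdges]
    exact ⟨fun h i hi hk => h ⟨i, hk, hi⟩, fun h ⟨f, hf, hfe⟩ =>
      h ⟨f, keptEdges_subset M ω hf⟩ hfe hf⟩
  rw [yhatOf, if_neg fun h => he (keptEdges_subset M ω h), if_neg he, Set.indicator_apply]
  simp only [Set.mem_setOf_eq, ← hfree, ite_not]

variable {μ : Measure ({e // e ∈ M} → Bool)}

lemma integral_yhatOf_of_notMem
    (hμ : ∀ S : Finset {e // e ∈ M}, μ.real {ω | ∀ i ∈ S, ω i = false} = (1 - p) ^ #S)
    (hp : p < 1) (he : e ∉ M) (hpe : pe e = (1 - p) ^ #(adjEdges M e)) :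
    ∫ ω, yhatOf M p x pe ω e ∂μ = (1 - p) * x e := by
  have hpe₀ : pe e ≠ 0 := hpe ▸ pow_ne_zero _ (sub_ne_zero.mpr hp.ne')
  simp_rw [yhatOf_of_notMem he]
  rw [integral_indicator_const _ MeasurableSet.of_discrete, hμ, ← hpe, smul_eq_mul]
  field_simp

lemma measureReal_notMem_keptEdges
    (hμ : ∀ S : Finset {e // e ∈ M}, μ.real {ω | ∀ i ∈ S, ω i = false} = (1 - p) ^ #S)
    (he : e ∈ M) : μ.real {ω | e ∉ keptEdges M ω} = 1 - p := by
  have hA : {ω | e ∉ keptEdges M ω} =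
      {ω | ∀ i ∈ ({⟨e, he⟩} : Finset {e // e ∈ M}), ω i = false} := by
    ext ω
    simpa using (coe_mem_keptEdges (ω := ω) ⟨e, he⟩).not
  rw [hA, hμ, card_singleton, pow_one]

end yhatOf

def vertexSum (G : Finset (Sym2 V)) (w y : Sym2 V → ℝ) (u : V) : ℝ :=
  ∑ e ∈ G.filter fun e => u ∈ e, w e * y e

section vertexSum

variable {M G : Finset (Sym2 V)} {p : ℝ} {w x pe : Sym2 V → ℝ}
  {μ : Measure ({e // e ∈ M} → Bool)} {u : V} {estar : Sym2 V}

lemma setIntegral_vertexSum_notMem_keptEdges [IsFiniteMeasure μ] (hM : IsMatching M)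
    (hμ : ∀ S : Finset {e // e ∈ M}, μ.real {ω | ∀ i ∈ S, ω i = false} = (1 - p) ^ #S)
    (hp : p < 1) (hpe : ∀ e ∈ G, e ∉ M → pe e = (1 - p) ^ #(adjEdges M e))
    (hestar : estar ∈ M) (hu : u ∈ estar) :
    ∫ ω in {ω | estar ∉ keptEdges M ω}, vertexSum G w (yhatOf M p x pe ω) u ∂μ =
      (1 - p) * vertexSum G w x u := by
  simp only [vertexSum]
  rw [integral_finset_sum _ fun _ _ => Integrable.of_finite, mul_sum]
  refine sum_congr rfl fun e he => ?_
  rw [integral_const_mul, mul_left_comm]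
  congr 1
  obtain rfl | hne := eq_or_ne e estar
  · rw [setIntegral_congr_fun (s := {ω | e ∉ keptEdges M ω}) MeasurableSet.of_discrete
      fun ω hω => yhatOf_of_mem_of_notMem_keptEdges hestar hω, setIntegral_const,
      measureReal_notMem_keptEdges hμ hestar, smul_eq_mul]
  · have heM : e ∉ M := hM.notMem_of_ne hestar (mem_filter.mp he).2 hu hne
    rw [setIntegral_eq_integral_of_forall_compl_eq_zero fun ω hω => ?_,
      integral_yhatOf_of_notMem hμ hp heM (hpe e (mem_filter.mp he).1 heM)]
    exact yhatOf_eq_zero_of_adj heM (not_not.mp hω) (mem_filter.mp he).2 hu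

lemma integral_cond_vertexSum [IsFiniteMeasure μ] (hM : IsMatching M)
    (hμ : ∀ S : Finset {e // e ∈ M}, μ.real {ω | ∀ i ∈ S, ω i = false} = (1 - p) ^ #S)
    (hp : p < 1) (hpe : ∀ e ∈ G, e ∉ M → pe e = (1 - p) ^ #(adjEdges M e))
    (hestar : estar ∈ M) (hu : u ∈ estar) :
    ∫ ω, vertexSum G w (yhatOf M p x pe ω) u ∂μ[|{ω | estar ∉ keptEdges M ω}] =
      vertexSum G w x u := by
  rw [integral_cond_eq_inv_smul_setIntegral,
    setIntegral_vertexSum_notMem_keptEdges hM hμ hp hpe hestar hu,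
    measureReal_notMem_keptEdges hμ hestar, smul_eq_mul,
    inv_mul_cancel_left₀ (sub_ne_zero.mpr hp.ne')]

lemma vertexSum_eq_of_mem_keptEdges {ω : {e // e ∈ M} → Bool} (hM : IsMatching M)
    (hG : estar ∈ G) (hu : u ∈ estar) (hω : estar ∈ keptEdges M ω) :
    vertexSum G w (yhatOf M p x pe ω) u = w estar := by
  rw [vertexSum, sum_eq_single_of_mem estar (mem_filter.mpr ⟨hG, hu⟩) fun e he hne => ?_,
    yhatOf_of_mem_keptEdges hω, mul_one]
  have heM : e ∉ M :=
    hM.notMem_of_ne (keptEdges_subset M ω hω) (mem_filter.mp he).2 hu hne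
  rw [yhatOf_eq_zero_of_adj heM hω (mem_filter.mp he).2 hu, mul_zero]

lemma integral_vertexSum_of_mem [IsProbabilityMeasure μ] (hM : IsMatching M)
    (hμ : ∀ S : Finset {e // e ∈ M}, μ.real {ω | ∀ i ∈ S, ω i = false} = (1 - p) ^ #S)
    (hp : p < 1) (hpe : ∀ e ∈ G, e ∉ M → pe e = (1 - p) ^ #(adjEdges M e))
    (hestar : estar ∈ M) (hG : estar ∈ G) (hu : u ∈ estar) :
    ∫ ω, vertexSum G w (yhatOf M p x pe ω) u ∂μ =
      p * w estar + (1 - p) * vertexSum G w x u := by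
  rw [← integral_add_compl (s := {ω | estar ∉ keptEdges M ω}) MeasurableSet.of_discrete
      Integrable.of_finite,
    setIntegral_vertexSum_notMem_keptEdges hM hμ hp hpe hestar hu,
    setIntegral_congr_fun (s := {ω | estar ∉ keptEdges M ω}ᶜ) MeasurableSet.of_discrete
      fun ω hω => vertexSum_eq_of_mem_keptEdges hM hG hu (not_not.mp hω),
    setIntegral_const, measureReal_compl MeasurableSet.of_discrete,
    measureReal_notMem_keptEdges hμ hestar, probReal_univ, smul_eq_mul]
  ring

lemma integral_vertexSum_of_not_covered [IsFiniteMeasure μ]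
    (hμ : ∀ S : Finset {e // e ∈ M}, μ.real {ω | ∀ i ∈ S, ω i = false} = (1 - p) ^ #S)
    (hp : p < 1) (hpe : ∀ e ∈ G, e ∉ M → pe e = (1 - p) ^ #(adjEdges M e))
    (hu : ¬ ∃ f ∈ M, u ∈ f) :
    ∫ ω, vertexSum G w (yhatOf M p x pe ω) u ∂μ = (1 - p) * vertexSum G w x u := by
  simp only [vertexSum]
  rw [integral_finset_sum _ fun _ _ => Integrable.of_finite, mul_sum]
  refine sum_congr rfl fun e he => ?_
  have heM : e ∉ M := fun heM => hu ⟨e, heM, (mem_filter.mp he).2⟩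
  rw [integral_const_mul, integral_yhatOf_of_notMem hμ hp heM (hpe e (mem_filter.mp he).1 heM),
    mul_left_comm]

end vertexSum

/-- expectation identities for the random assignment ŷ built from a
random submatching M' of a fixed matching M* (each edge of M* kept independently with
probability p).  For a vertex u covered by e* ∈ M*:
E[Σ_{e∋u} w_e ŷ_e | e* ∉ M'] = Σ_{e∋u} w_e x_e and
E[Σ_{e∋u} w_e ŷ_e] = p·w_{e*} + (1−p)·Σ_{e∋u} w_e x_e;
for u not covered by M*: E[Σ_{e∋u} w_e ŷ_e] = (1−p)·Σ_{e∋u} w_e x_e. -/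
theorem yhat_vertex_expectations
    (G : Finset (Sym2 V)) (hG : ∀ e ∈ G, ¬ e.IsDiag)
    (Mstar : Finset (Sym2 V)) (hMG : Mstar ⊆ G) (hMm : IsMatching Mstar)
    (p : ℝ) (hp0 : 0 < p) (hp : p ≤ 1/2) (hp1 : ENNReal.ofReal p ≤ 1)
    (w x : Sym2 V → ℝ)
    (P : Measure ({e // e ∈ Mstar} → Bool))
    (hP : P = Measure.pi fun _ => (PMF.bernoulli (Real.toNNReal p) (ENNReal.coe_le_one_iff.mp hp1)).toMeasure)
    (M' : ({e // e ∈ Mstar} → Bool) → Finset (Sym2 V))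
    (hM' : ∀ ω, M' ω = Mstar.filter fun e => ∀ h : e ∈ Mstar, ω ⟨e, h⟩ = true)
    (cov : V → Prop) (hcov : ∀ u, cov u ↔ ∃ f ∈ Mstar, u ∈ f)
    (pe : Sym2 V → ℝ)
    (hpe : ∀ e : Sym2 V, pe e =
      (1 - p) ^ ((if cov e.out.1 then 1 else 0) + (if cov e.out.2 then 1 else 0)))
    (yhat : ({e // e ∈ Mstar} → Bool) → Sym2 V → ℝ)
    (hyhat : ∀ ω e, yhat ω e =
      if e ∈ M' ω then 1
      else if e ∈ Mstar then x e
      else if ∃ f ∈ M' ω, ∃ v, v ∈ e ∧ v ∈ f then 0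
      else (1 - p) * x e / pe e) :
    (∀ u : V, ∀ estar ∈ Mstar, u ∈ estar →
      (∫ ω, (∑ e ∈ G.filter fun e => u ∈ e, w e * yhat ω e)
          ∂(ProbabilityTheory.cond P {ω | estar ∉ M' ω}) =
        ∑ e ∈ G.filter fun e => u ∈ e, w e * x e) ∧
      (∫ ω, (∑ e ∈ G.filter fun e => u ∈ e, w e * yhat ω e) ∂P =
        p * w estar + (1 - p) * ∑ e ∈ G.filter fun e => u ∈ e, w e * x e)) ∧
    (∀ u : V, ¬ cov u →
      ∫ ω, (∑ e ∈ G.filter fun e => u ∈ e, w e * yhat ω e) ∂P =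
        (1 - p) * ∑ e ∈ G.filter fun e => u ∈ e, w e * x e) := by
  obtain rfl : M' = keptEdges Mstar := funext hM'
  obtain rfl : yhat = yhatOf Mstar p x pe := funext₂ hyhat
  have : IsProbabilityMeasure P := hP ▸ inferInstance
  have hp1' : p < 1 := by linarith
  have hμ : ∀ S : Finset {e // e ∈ Mstar}, P.real {ω | ∀ i ∈ S, ω i = false} = (1 - p) ^ #S := by
    intro S
    rw [hP, measureReal_pi_bernoulli_forall_false, Real.coe_toNNReal _ hp0.le]
  have hpe' : ∀ e ∈ G, e ∉ Mstar → pe e = (1 - p) ^ #(adjEdges Mstar e) := by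
    intro e he heM
    rw [hpe, hMm.card_adjEdges (hG e he) heM]
    simp only [hcov]
  exact ⟨fun u estar hestar hu =>
      ⟨integral_cond_vertexSum hMm hμ hp1' hpe' hestar hu,
        integral_vertexSum_of_mem hMm hμ hp1' hpe' hestar (hMG hestar) hu⟩,
    fun u hu => integral_vertexSum_of_not_covered hμ hp1' hpe' ((hcov u).not.mp hu)⟩
end
end

section
/- A function f: {0,1}^n → ℝ is self-bounding if there exist f_i: {0,1}^{n−1} → ℝ with 0 ≤ f(x) − f_i(x^{(i)}) ≤ 1 for all i and Σ_{i=1}^n (f(x) − f_i(x^{(i)})) ≤ f(x). The scaled maximum-weight-matching function is self-bounding: fix a weighted graph with a fixed edge set F (always present) and optional edges e_1,...,e_k with weights in [0, W]; for x ∈ {0,1}^k, let f(x) = μ_w(F ∪ {e_i : x_i = 1})/W. Then f is self-bounding, with f_i(x^{(i)}) = μ_w(F ∪ {e_j : x_j = 1, j ≠ i})/W. -/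
/-!
Fix a maximum-weight matching `M` of `G = F ∪ E_x`. Dropping one optional edge `e_i` loses
at most the weight of `M \ G_i ⊆ {e_i}`, because `M ∩ G_i` is still a matching of `G_i`.
The sets `M \ G_i` are disjoint pieces of `M`, and every edge of a maximum-weight matching
has nonnegative weight (otherwise dropping it would help), so the losses add up to at most
`w(M) = μ_w(G)`.
-/

open scoped Classical BigOperators

noncomputable section

variable {V : Type*}

lemma IsMatching.subset {M M' : Finset (Sym2 V)} (h : M' ⊆ M) (hM : IsMatching M) :
    IsMatching M' :=
  ⟨fun e he => hM.1 e (h he), fun e he f hf => hM.2 e (h he) f (h hf)⟩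

def IsMaxWeightMatching (G : Finset (Sym2 V)) (w : Sym2 V → ℝ) (M : Finset (Sym2 V)) : Prop :=
  M ⊆ G ∧ IsMatching M ∧ ∑ e ∈ M, w e = matchWeightR G w

section matchWeightR

variable {G G' M : Finset (Sym2 V)} {w : Sym2 V → ℝ}

lemma finite_matchingWeights (G : Finset (Sym2 V)) (w : Sym2 V → ℝ) :
    {s | ∃ M : Finset (Sym2 V), M ⊆ G ∧ IsMatching M ∧ ∑ e ∈ M, w e = s}.Finite :=
  (G.powerset.image fun M => ∑ e ∈ M, w e).finite_toSet.subset <| by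
    rintro _ ⟨M, hMG, -, rfl⟩
    exact Finset.mem_image.2 ⟨M, Finset.mem_powerset.2 hMG, rfl⟩

lemma sum_le_matchWeightR (hMG : M ⊆ G) (hM : IsMatching M) :
    ∑ e ∈ M, w e ≤ matchWeightR G w :=
  le_csSup (finite_matchingWeights G w).bddAbove ⟨M, hMG, hM, rfl⟩

lemma exists_isMaxWeightMatching (G : Finset (Sym2 V)) (w : Sym2 V → ℝ) :
    ∃ M, IsMaxWeightMatching G w M := by
  refine Set.Nonempty.csSup_mem ?_ (finite_matchingWeights G w)
  exact ⟨0, ∅, by simp [IsMatching]⟩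

lemma matchWeightR_mono (h : G ⊆ G') : matchWeightR G w ≤ matchWeightR G' w := by
  obtain ⟨M, hMG, hM, hsum⟩ := exists_isMaxWeightMatching G w
  exact hsum ▸ sum_le_matchWeightR (hMG.trans h) hM

lemma IsMaxWeightMatching.weight_nonneg (hM : IsMaxWeightMatching G w M) {e : Sym2 V}
    (he : e ∈ M) : 0 ≤ w e := by
  have := sum_le_matchWeightR (w := w) ((M.erase_subset e).trans hM.1)
    (hM.2.1.subset (M.erase_subset e))
  rw [Finset.sum_erase_eq_sub he, hM.2.2] at this
  linarith

lemma IsMaxWeightMatching.matchWeightR_sub_le_sum_sdiff (hM : IsMaxWeightMatching G w M)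
    (G' : Finset (Sym2 V)) :
    matchWeightR G w - matchWeightR G' w ≤ ∑ e ∈ M \ G', w e := by
  have := sum_le_matchWeightR (w := w) Finset.inter_subset_right
    (hM.2.1.subset (Finset.inter_subset_left (s₂ := G')))
  rw [← hM.2.2, ← Finset.sum_inter_add_sum_sdiff M G']
  linarith

lemma matchWeightR_sub_le_of_sdiff_subset_singleton {e : Sym2 V} (h : G \ G' ⊆ {e})
    (hw : 0 ≤ w e) : matchWeightR G w - matchWeightR G' w ≤ w e := by
  obtain ⟨M, hM⟩ := exists_isMaxWeightMatching G w
  calc matchWeightR G w - matchWeightR G' w ≤ ∑ a ∈ M \ G', w a :=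
        hM.matchWeightR_sub_le_sum_sdiff G'
    _ ≤ ∑ a ∈ {e}, w a := Finset.sum_le_sum_of_subset_of_nonneg
        ((Finset.sdiff_subset_sdiff hM.1 le_rfl).trans h) (by simpa using fun _ => hw)
    _ = w e := Finset.sum_singleton w e

lemma sum_matchWeightR_sub_le {ι : Type*} (s : Finset ι) (G' : ι → Finset (Sym2 V))
    (hdisj : (s : Set ι).PairwiseDisjoint fun i => G \ G' i) :
    ∑ i ∈ s, (matchWeightR G w - matchWeightR (G' i) w) ≤ matchWeightR G w := by
  obtain ⟨M, hM⟩ := exists_isMaxWeightMatching G w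
  have hdisjM : (s : Set ι).PairwiseDisjoint fun i => M \ G' i :=
    hdisj.mono fun i => Finset.sdiff_subset_sdiff hM.1 le_rfl
  calc ∑ i ∈ s, (matchWeightR G w - matchWeightR (G' i) w)
      ≤ ∑ i ∈ s, ∑ e ∈ M \ G' i, w e :=
        Finset.sum_le_sum fun i _ => hM.matchWeightR_sub_le_sum_sdiff (G' i)
    _ = ∑ e ∈ s.biUnion fun i => M \ G' i, w e := (Finset.sum_biUnion hdisjM).symm
    _ ≤ ∑ e ∈ M, w e := Finset.sum_le_sum_of_subset_of_nonneg
        (Finset.biUnion_subset.2 fun i _ => Finset.sdiff_subset)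
        fun e he _ => hM.weight_nonneg he
    _ = matchWeightR G w := hM.2.2

end matchWeightR

lemma union_image_sdiff_union_image_erase_subset {α ι : Type*} [DecidableEq α] [DecidableEq ι]
    (F : Finset α) (s : Finset ι) (f : ι → α) (i : ι) :
    (F ∪ s.image f) \ (F ∪ (s.erase i).image f) ⊆ {f i} := by
  intro e he
  simp only [Finset.mem_sdiff, Finset.mem_union, Finset.mem_image, Finset.mem_erase] at he
  obtain ⟨hF | ⟨j, hj, rfl⟩, hnot⟩ := he
  · exact absurd (Or.inl hF) hnot
  · obtain rfl : j = i := by_contra fun hji => hnot (Or.inr ⟨j, ⟨hji, hj⟩, rfl⟩)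
    exact Finset.mem_singleton_self _

lemma filter_update_erase {ι : Type*} [Fintype ι] [DecidableEq ι] (x : ι → Bool) (i : ι)
    (b : Bool) :
    (Finset.univ.filter fun j => Function.update x i b j = true).erase i =
      (Finset.univ.filter fun j => x j = true).erase i := by
  ext j
  by_cases hji : j = i <;> simp [hji]

theorem matching_function_self_bounding_general
    (k : ℕ) (F : Finset (Sym2 V)) (opt : Fin k → Sym2 V)
    (hinj : Function.Injective opt)
    (W : ℝ) (hW : 0 < W) (w : Sym2 V → ℝ)
    (hwopt : ∀ i, 0 < w (opt i) ∧ w (opt i) ≤ W)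
    (f : (Fin k → Bool) → ℝ)
    (hf : ∀ x, f x =
      matchWeightR (F ∪ (Finset.univ.filter fun i => x i = true).image opt) w / W)
    (g : Fin k → (Fin k → Bool) → ℝ)
    (hg : ∀ i x, g i x =
      matchWeightR
        (F ∪ ((Finset.univ.filter fun j => x j = true).erase i).image opt) w / W) :
    (∀ i x b, g i (Function.update x i b) = g i x) ∧
    (∀ i x, 0 ≤ f x - g i x ∧ f x - g i x ≤ 1) ∧
    (∀ x, ∑ i, (f x - g i x) ≤ f x) := by
  have hsdiff : ∀ (i : Fin k) (x : Fin k → Bool),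
      (F ∪ (Finset.univ.filter fun j => x j = true).image opt) \
        (F ∪ ((Finset.univ.filter fun j => x j = true).erase i).image opt) ⊆ {opt i} :=
    fun i x => union_image_sdiff_union_image_erase_subset _ _ _ _
  refine ⟨fun i x b => by rw [hg, hg, filter_update_erase], fun i x => ?_, fun x => ?_⟩
  · rw [hf, hg, ← sub_div]
    refine ⟨div_nonneg (sub_nonneg.2 (matchWeightR_mono ?_)) hW.le, (div_le_one hW).2 ?_⟩
    · exact Finset.union_subset_union_right (Finset.image_subset_image (Finset.erase_subset _ _))
    · exact (matchWeightR_sub_le_of_sdiff_subset_singleton (hsdiff i x) (hwopt i).1.le).trans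
        (hwopt i).2
  · simp only [hf, hg, ← sub_div, ← Finset.sum_div]
    refine div_le_div_of_nonneg_right (sum_matchWeightR_sub_le _ _ ?_) hW.le
    intro i _ j _ hij
    exact Finset.disjoint_of_subset_left (hsdiff i x) <| Finset.disjoint_of_subset_right
      (hsdiff j x) (Finset.disjoint_singleton.2 (hinj.ne hij))

/-- the scaled maximum-weight-matching function is self-bounding.
With a fixed edge set `F`, optional edges e_1,…,e_k with weights in (0, W], and
f(x) = μ_w(F ∪ {e_i : x_i = 1})/W, the functions
f_i(x) = μ_w(F ∪ {e_j : x_j = 1, j ≠ i})/W witness that `f` is self-bounding: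
f_i does not depend on coordinate i, 0 ≤ f − f_i ≤ 1, and Σ_i (f − f_i) ≤ f. -/
theorem matching_function_self_bounding
    (k : ℕ) (F : Finset (Sym2 V)) (opt : Fin k → Sym2 V)
    (hinj : Function.Injective opt)
    (hG : ∀ e ∈ F, ¬ e.IsDiag) (hGopt : ∀ i, ¬ (opt i).IsDiag)
    (W : ℝ) (hW : 0 < W) (w : Sym2 V → ℝ)
    (hwF : ∀ e ∈ F, 0 < w e ∧ w e ≤ W) (hwopt : ∀ i, 0 < w (opt i) ∧ w (opt i) ≤ W)
    (f : (Fin k → Bool) → ℝ)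
    (hf : ∀ x, f x =
      matchWeightR (F ∪ (Finset.univ.filter fun i => x i = true).image opt) w / W)
    (g : Fin k → (Fin k → Bool) → ℝ)
    (hg : ∀ i x, g i x =
      matchWeightR
        (F ∪ ((Finset.univ.filter fun j => x j = true).erase i).image opt) w / W) :
    (∀ i x b, g i (Function.update x i b) = g i x) ∧
    (∀ i x, 0 ≤ f x - g i x ∧ f x - g i x ≤ 1) ∧
    (∀ x, ∑ i, (f x - g i x) ≤ f x) :=
  matching_function_self_bounding_general k F opt hinj W hW w hwopt f hf g hg
end
end
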